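/- arXiv:2203.09453 — 6 statements merged into one kernel-verified Lean document; each statement's English description precedes it below -/
import Mathlib

section
/- Let G be a symmetric positive semidefinite real 3×3 matrix, |y|_D := √(y · (G y)), and D = {y ∈ ℝ³ : y · (G y) ≤ 1}. Define V_D^cv : ℝ³ → ℝ by V_D^cv(y) = −|y|_D² for y ∈ D and V_D^cv(y) = −2|y|_D + 1 for y ∉ D. Then V_D^cv is continuous and concave on ℝ³. -/
/-!
Writing `|y|_D = √(y ⬝ᵥ G y)`, we have `V_D^cv = φ ∘ |·|_D` with `φ t = -t²` for `t ≤ 1` and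
`φ t = 1 - 2t` beyond. Since `|·|_D` is the seminorm of the inner product `⟪x, y⟫ = x ⬝ᵥ G y`,
it is convex and nonnegative, while `φ t = 1 - (2t + max (1 - t) 0 ²)` is concave and
nonincreasing on `[0, ∞)`; a concave nonincreasing function of a convex function is concave.
-/

open scoped Matrix
open Set

theorem ConcaveOn.comp_convexOn_of_mapsTo {𝕜 E α β : Type*} [Semiring 𝕜] [PartialOrder 𝕜]
    [AddCommMonoid E] [AddCommMonoid α] [PartialOrder α] [AddCommMonoid β] [PartialOrder β]
    [SMul 𝕜 E] [SMul 𝕜 α] [SMul 𝕜 β] {s : Set E} {t : Set β} {f : E → β} {g : β → α}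
    (hg : ConcaveOn 𝕜 t g) (hf : ConvexOn 𝕜 s f) (hg' : AntitoneOn g t) (hst : MapsTo f s t) :
    ConcaveOn 𝕜 s (g ∘ f) :=
  ⟨hf.1, fun _ hx _ hy _ _ ha hb hab =>
    (hg.2 (hst hx) (hst hy) ha hb hab).trans <|
      hg' (hst <| hf.1 hx hy ha hb hab) (hg.1 (hst hx) (hst hy) ha hb hab)
        (hf.2 hx hy ha hb hab)⟩

theorem Matrix.PosSemidef.convexOn_sqrt_dotProduct_mulVec {n : Type*} [Fintype n]
    {G : Matrix n n ℝ} (hG : G.PosSemidef) :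
    ConvexOn ℝ univ fun y => √(y ⬝ᵥ G *ᵥ y) := by
  let _ := G.toSeminormedAddCommGroup hG
  let _ := G.toInnerProductSpace hG
  -- `‖·‖` alone would elaborate to the sup norm of the Pi type.
  have h : (fun y => √(y ⬝ᵥ G *ᵥ y)) = @norm _ (G.toSeminormedAddCommGroup hG).toNorm := by
    funext y
    rw [@norm_eq_sqrt_re_inner ℝ, dotProduct_comm]
    rfl
  rw [h]
  exact convexOn_norm convex_univ

noncomputable def concaveProfile (t : ℝ) : ℝ :=
  if t ≤ 1 then -t ^ 2 else -2 * t + 1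

theorem concaveProfile_eq_one_sub (t : ℝ) :
    concaveProfile t = 1 - (2 * t + max (1 - t) 0 ^ 2) := by
  unfold concaveProfile
  split_ifs with ht
  · rw [max_eq_left (by linarith)]
    ring
  · rw [max_eq_right (by linarith)]
    ring

theorem continuous_concaveProfile : Continuous concaveProfile := by
  simp_rw [funext concaveProfile_eq_one_sub]
  fun_prop

theorem concaveOn_concaveProfile : ConcaveOn ℝ univ concaveProfile := by
  have hmax : ConvexOn ℝ univ fun t : ℝ => max (1 - t) 0 :=
    ((convexOn_const 1 convex_univ).sub (concaveOn_id convex_univ)).sup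
      (convexOn_const 0 convex_univ)
  have hconv : ConvexOn ℝ univ fun t : ℝ => 2 * t + max (1 - t) 0 ^ 2 :=
    ((convexOn_id convex_univ).smul zero_le_two).add
      (hmax.pow (fun _ _ => le_max_right _ _) 2)
  simp_rw [funext concaveProfile_eq_one_sub]
  exact (concaveOn_const 1 convex_univ).sub hconv

theorem antitoneOn_concaveProfile : AntitoneOn concaveProfile (Ici 0) := by
  intro s hs t _ hst
  unfold concaveProfile
  split_ifs <;> nlinarith [mem_Ici.mp hs]

open Classical in
/-- The concave part `V_D^cv` of the confinement potential, given by `−|y|_D²` on `D` and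
`−2|y|_D + 1` outside of `D`, is continuous and concave on `ℝ³`. -/
theorem concave_part_continuous_concave
    (G : Matrix (Fin 3) (Fin 3) ℝ) (hG : G.PosSemidef)
    (Vcv : (Fin 3 → ℝ) → ℝ)
    (hVcv : ∀ y, Vcv y =
      if y ⬝ᵥ G.mulVec y ≤ 1 then -(Real.sqrt (y ⬝ᵥ G.mulVec y)) ^ 2
      else -2 * Real.sqrt (y ⬝ᵥ G.mulVec y) + 1) :
    Continuous Vcv ∧ ConcaveOn ℝ Set.univ Vcv := by
  have hV : Vcv = concaveProfile ∘ fun y => √(y ⬝ᵥ G *ᵥ y) := by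
    funext y
    simp only [hVcv, Function.comp_apply, concaveProfile, Real.sqrt_le_one]
  subst hV
  exact ⟨continuous_concaveProfile.comp (by fun_prop),
    (concaveOn_concaveProfile.subset (subset_univ _) (convex_Ici 0)).comp_convexOn_of_mapsTo
      hG.convexOn_sqrt_dotProduct_mulVec antitoneOn_concaveProfile
      fun _ _ => Real.sqrt_nonneg _⟩
end

section
/- Let G be a symmetric positive semidefinite real 3×3 matrix, |y|_D := √(y · (G y)), D = {y ∈ ℝ³ : y · (G y) ≤ 1}, and V_D^cv(y) := −|y|_D² for y ∈ D, V_D^cv(y) := −2|y|_D + 1 for y ∉ D. Define g : ℝ³ → ℝ³ by g(x) = −2 G x for x ∈ D and g(x) = −2 G x / |x|_D for x ∉ D. Then the concavity (supergradient) inequality V_D^cv(x) + g(x) · (y − x) ≥ V_D^cv(y) holds for all x, y ∈ ℝ³. -/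
/-!
Write `V_D^cv(y) = φ(|y|_D)` with `φ(r) = -r²` for `r ≤ 1` and `φ(r) = 1 - 2r` beyond: `φ` is
concave of class `C¹` with `φ'(s) = -2 min(s, 1)`, so it lies below its tangent lines. Moreover
`g(x) = w(s) G x` with `s = |x|_D` and a weight `w(s) ≤ 0` satisfying `w(s) s = φ'(s)`. Hence
`g(x) ⬝ (y - x) = w(s) (⟨y, x⟩_G - s²)`, and Cauchy–Schwarz for the semi-inner product
`⟨u, v⟩_G = u ⬝ G v` bounds this below by `φ'(s) (|y|_D - s)`; the tangent inequality for `φ`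
at `s` finishes the proof.
-/

open scoped Matrix

namespace Matrix

theorem PosSemidef.dotProduct_mulVec_le_sqrt_mul_sqrt {n : Type*} [Fintype n]
    {G : Matrix n n ℝ} (hG : G.PosSemidef) (x y : n → ℝ) :
    x ⬝ᵥ G *ᵥ y ≤ √(x ⬝ᵥ G *ᵥ x) * √(y ⬝ᵥ G *ᵥ y) := by
  let E := G.toSeminormedAddCommGroup hG
  let := G.toInnerProductSpace hG
  have hinner (u v : n → ℝ) : inner ℝ u v = u ⬝ᵥ G *ᵥ v := dotProduct_comm _ _
  have hnorm (u : n → ℝ) : @norm _ E.toNorm u = √(u ⬝ᵥ G *ᵥ u) := by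
    rw [norm_eq_sqrt_re_inner (𝕜 := ℝ), RCLike.re_to_real, hinner]
  simpa only [hinner, hnorm] using real_inner_le_norm x y

end Matrix

noncomputable def confinementProfile (r : ℝ) : ℝ :=
  if r ≤ 1 then -r ^ 2 else -2 * r + 1

noncomputable def confinementProfileDeriv (r : ℝ) : ℝ :=
  if r ≤ 1 then -2 * r else -2

noncomputable def confinementWeight (r : ℝ) : ℝ :=
  if r ≤ 1 then -2 else -2 / r

theorem confinementProfile_le_tangent (s t : ℝ) :
    confinementProfile t ≤ confinementProfile s + confinementProfileDeriv s * (t - s) := by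
  unfold confinementProfile confinementProfileDeriv
  split_ifs with ht hs hs
  · nlinarith [sq_nonneg (s - t)]
  · nlinarith [sq_nonneg (t - 1)]
  · nlinarith
  · linarith

theorem confinementWeight_nonpos (r : ℝ) : confinementWeight r ≤ 0 := by
  unfold confinementWeight
  split_ifs with hr
  · norm_num
  · exact div_nonpos_of_nonpos_of_nonneg (by norm_num) (by linarith)

theorem confinementWeight_mul_self (r : ℝ) :
    confinementWeight r * r = confinementProfileDeriv r := by
  unfold confinementWeight confinementProfileDeriv
  split_ifs with hr
  · ring
  · field_simp [show r ≠ 0 by linarith]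

theorem confinementProfile_le_add_weight_mul {s t b : ℝ} (hb : b ≤ s * t) :
    confinementProfile t ≤ confinementProfile s + confinementWeight s * (b - s ^ 2) :=
  calc confinementProfile t
      ≤ confinementProfile s + confinementProfileDeriv s * (t - s) :=
        confinementProfile_le_tangent s t
    _ = confinementProfile s + confinementWeight s * (s * t - s ^ 2) := by
        rw [← confinementWeight_mul_self]; ring
    _ ≤ confinementProfile s + confinementWeight s * (b - s ^ 2) :=
        (add_le_add_iff_left _).2 <|
          mul_le_mul_of_nonpos_left (by linarith) (confinementWeight_nonpos s)

open Classical in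
/-- Supergradient (concavity) inequality for the concave part `V_D^cv` of the confinement
potential: with `g(x) = −2 G x` on `D` and `g(x) = −2 G x / |x|_D` outside `D`, one has
`V_D^cv(x) + g(x) ⬝ (y − x) ≥ V_D^cv(y)` for all `x, y ∈ ℝ³`. -/
theorem concave_part_supergradient_inequality
    (G : Matrix (Fin 3) (Fin 3) ℝ) (hG : G.PosSemidef)
    (Vcv : (Fin 3 → ℝ) → ℝ)
    (hVcv : ∀ y, Vcv y =
      if y ⬝ᵥ G.mulVec y ≤ 1 then -(Real.sqrt (y ⬝ᵥ G.mulVec y)) ^ 2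
      else -2 * Real.sqrt (y ⬝ᵥ G.mulVec y) + 1)
    (g : (Fin 3 → ℝ) → (Fin 3 → ℝ))
    (hg : ∀ x, g x =
      if x ⬝ᵥ G.mulVec x ≤ 1 then (-2 : ℝ) • G.mulVec x
      else (-2 / Real.sqrt (x ⬝ᵥ G.mulVec x)) • G.mulVec x) :
    ∀ x y : Fin 3 → ℝ, Vcv y ≤ Vcv x + g x ⬝ᵥ (y - x) := by
  intro x y
  have hV (z : Fin 3 → ℝ) : Vcv z = confinementProfile √(z ⬝ᵥ G *ᵥ z) := by
    simp only [hVcv, confinementProfile, Real.sqrt_le_one]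
  have hgx : g x = confinementWeight √(x ⬝ᵥ G *ᵥ x) • G *ᵥ x := by
    simp only [hg, confinementWeight, Real.sqrt_le_one, ite_smul]
  have hx : 0 ≤ x ⬝ᵥ G *ᵥ x := by simpa using hG.dotProduct_mulVec_nonneg x
  have htangent := confinementProfile_le_add_weight_mul
    ((hG.dotProduct_mulVec_le_sqrt_mul_sqrt y x).trans_eq (mul_comm _ _))
  rw [Real.sq_sqrt hx] at htangent
  rwa [hV, hV, hgx, smul_dotProduct, smul_eq_mul, dotProduct_comm (G *ᵥ x), sub_dotProduct]
end

section
/- Let f : [0, 1] → ℝ be Lipschitz continuous with Lipschitz constant K ≥ 0, and let M = sup_{x ∈ [0,1]} |f(x)|. Then M³ ≤ 8 (M + K) ∫₀¹ f(x)² dx. (This is the Gagliardo–Nirenberg interpolation inequality ‖f‖_{L^∞} ≤ c ‖f‖_{L²}^{2/3} ‖f‖_{W^{1,∞}}^{1/3} on the unit interval in explicit form.) -/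
/-- Explicit Gagliardo–Nirenberg interpolation inequality on the unit interval:
if `f` is Lipschitz with constant `K` on `[0,1]` and `M = sup_{[0,1]} |f|`, then
`M³ ≤ 8 (M + K) ∫₀¹ f²`. -/
theorem gagliardo_nirenberg_unit_interval
    (f : ℝ → ℝ) (K : ℝ) (hK : 0 ≤ K)
    (hf : ∀ x ∈ Set.Icc (0 : ℝ) 1, ∀ y ∈ Set.Icc (0 : ℝ) 1, |f x - f y| ≤ K * |x - y|)
    (M : ℝ) (hM : M = ⨆ x : Set.Icc (0 : ℝ) 1, |f x.1|) :
    M ^ 3 ≤ 8 * (M + K) * ∫ x in (0 : ℝ)..1, f x ^ 2 := by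
  have hcont : ContinuousOn f (Set.Icc (0:ℝ) 1) := by
    have : LipschitzOnWith (Real.toNNReal K) f (Set.Icc 0 1) := by
      apply LipschitzOnWith.of_dist_le'
      intro x hx y hy
      simpa [Real.dist_eq] using hf x hx y hy
    exact this.continuousOn
  have hcont2 : ContinuousOn (fun x => f x ^ 2) (Set.Icc (0:ℝ) 1) := hcont.pow 2
  have hInt : IntervalIntegrable (fun x => f x ^ 2) MeasureTheory.volume 0 1 := by
    apply ContinuousOn.intervalIntegrable
    rwa [Set.uIcc_of_le (by norm_num : (0:ℝ) ≤ 1)]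
  have hInt_nonneg : 0 ≤ ∫ x in (0:ℝ)..1, f x ^ 2 :=
    intervalIntegral.integral_nonneg (by norm_num) (fun x _ => sq_nonneg _)
  obtain ⟨x₀, hx₀, hmax⟩ := isCompact_Icc.exists_isMaxOn
    (Set.nonempty_Icc.2 (by norm_num : (0:ℝ) ≤ 1)) hcont.abs
  have hmax' : ∀ y ∈ Set.Icc (0:ℝ) 1, |f y| ≤ |f x₀| := fun y hy => hmax hy
  have hMeq : M = |f x₀| := by
    rw [hM]
    apply le_antisymm
    · exact ciSup_le (fun x => hmax' x.1 x.2)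
    · exact le_ciSup ⟨|f x₀|, by rintro v ⟨x, rfl⟩; exact hmax' x.1 x.2⟩
        (⟨x₀, hx₀⟩ : Set.Icc (0:ℝ) 1)
  have hM0 : 0 ≤ M := hMeq ▸ abs_nonneg _
  rcases hM0.eq_or_lt with hM0' | hMpos
  · rw [← hM0']
    have h0 : (0:ℝ)^3 = 0 := by norm_num
    rw [h0]
    exact mul_nonneg (by positivity) hInt_nonneg
  · have hMK : 0 < M + K := by linarith
    set ℓ : ℝ := M / (2 * (M + K)) with hℓ
    have hℓpos : 0 < ℓ := by positivity
    have hℓhalf : ℓ ≤ 1/2 := by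
      rw [hℓ, div_le_div_iff₀ (by positivity) (by norm_num)]
      nlinarith
    have hKℓ : K * ℓ ≤ M / 2 := by
      rw [hℓ, mul_div_assoc', div_le_div_iff₀ (by positivity) (by norm_num)]
      nlinarith
    -- the key pointwise bound near x₀
    have hlow : ∀ x ∈ Set.Icc (0:ℝ) 1, |x - x₀| ≤ ℓ → M / 2 ≤ |f x| := by
      intro x hx hxd
      have h1 : |f x₀ - f x| ≤ K * |x₀ - x| := hf x₀ hx₀ x hx
      have h2 : |x₀ - x| ≤ ℓ := by rwa [abs_sub_comm] at hxd
      have h3 : K * |x₀ - x| ≤ K * ℓ := mul_le_mul_of_nonneg_left h2 hK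
      have h4 : |f x₀| - |f x| ≤ |f x₀ - f x| := abs_sub_abs_le_abs_sub _ _
      have h5 : M - |f x| ≤ M / 2 := by rw [hMeq]; linarith
      linarith
    -- choose a subinterval [a,b] ⊆ [0,1] of length ℓ containing points close to x₀
    obtain ⟨a, b, ha, hab, hb, hba, hnear⟩ :
        ∃ a b : ℝ, 0 ≤ a ∧ a ≤ b ∧ b ≤ 1 ∧ b - a = ℓ ∧
          ∀ x ∈ Set.Icc a b, |x - x₀| ≤ ℓ := by
      rcases le_or_gt x₀ (1/2) with h | h
      · refine ⟨x₀, x₀ + ℓ, hx₀.1, by linarith, by linarith, by ring, ?_⟩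
        intro x hx
        rw [abs_le]; constructor <;> [linarith [hx.1]; linarith [hx.2]]
      · refine ⟨x₀ - ℓ, x₀, by linarith, by linarith, hx₀.2, by ring, ?_⟩
        intro x hx
        obtain ⟨hx1, hx2⟩ := hx
        rw [abs_le]; constructor <;> linarith
    have hIntab : IntervalIntegrable (fun x => f x ^ 2) MeasureTheory.volume a b := by
      apply hInt.mono_set
      rw [Set.uIcc_of_le hab, Set.uIcc_of_le (by norm_num : (0:ℝ) ≤ 1)]
      exact Set.Icc_subset_Icc ha hb
    have h1 : (b - a) * (M/2)^2 ≤ ∫ x in a..b, f x ^ 2 := by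
      have := intervalIntegral.integral_mono_on hab intervalIntegrable_const hIntab
        (fun x hx => by
          have hfx := hlow x ⟨le_trans ha hx.1, le_trans hx.2 hb⟩ (hnear x hx)
          calc (M/2)^2 ≤ |f x|^2 := by
                apply pow_le_pow_left₀ (by linarith) hfx
            _ = f x ^ 2 := sq_abs _)
      rwa [intervalIntegral.integral_const, smul_eq_mul] at this
    have h2 : ∫ x in a..b, f x ^ 2 ≤ ∫ x in (0:ℝ)..1, f x ^ 2 :=
      intervalIntegral.integral_mono_interval ha hab hb
        (MeasureTheory.ae_of_all _ (fun x => sq_nonneg _)) hInt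
    have hfinal : (b - a) * (M/2)^2 = M ^ 3 / (8 * (M + K)) := by
      rw [hba, hℓ]; field_simp; ring
    have : M ^ 3 / (8 * (M + K)) ≤ ∫ x in (0:ℝ)..1, f x ^ 2 := by
      rw [← hfinal]; linarith
    rw [div_le_iff₀ (by positivity)] at this
    linarith [this]
end

section
/- Let N ≥ 1, let 0 = x₀ < x₁ < ⋯ < x_N = 1 be a partition of [0,1] with max_{i} (x_{i+1} − x_i) ≤ h, and let g : [0,1] → ℝ be continuously differentiable with g(x_i) = 0 for all i = 0, 1, …, N. Then ∫₀¹ g(x)² dx ≤ h² ∫₀¹ g'(x)² dx. -/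
/-!
On a cell `[a, b]` of the partition, `g a = 0` gives `g t = ∫ s in a..t, g' s`, so Cauchy–Schwarz
bounds `g t ^ 2` by `(b - a) ∫ₐᵇ g'²`. Integrating over the cell gives
`∫ₐᵇ g² ≤ (b - a)² ∫ₐᵇ g'² ≤ h² ∫ₐᵇ g'²`, and summing over the cells gives the estimate on `[0, 1]`.
-/

open MeasureTheory Set Finset

theorem sq_integral_le_measureReal_univ_mul_integral_sq {α : Type*} [MeasurableSpace α]
    {μ : Measure α} [IsFiniteMeasure μ] {f : α → ℝ} (hf : MemLp f 2 μ) :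
    (∫ a, f a ∂μ) ^ 2 ≤ μ.real univ * ∫ a, f a ^ 2 ∂μ := by
  have hf1 : Integrable f μ := hf.integrable one_le_two
  have hf2 : Integrable (fun a => f a ^ 2) μ := hf.integrable_sq
  have hquad : ∀ c : ℝ, ∫ a, (f a - c) ^ 2 ∂μ
      = μ.real univ * (c * c) + (-2 * ∫ a, f a ∂μ) * c + ∫ a, f a ^ 2 ∂μ := by
    intro c
    have hexp : (fun a => (f a - c) ^ 2) = fun a => f a ^ 2 - 2 * c * f a + c ^ 2 := by
      ext a; ring
    have hlin : Integrable (fun a => f a ^ 2 - 2 * c * f a) μ := hf2.sub (hf1.const_mul _)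
    rw [hexp, integral_add hlin (integrable_const _), integral_sub hf2 (hf1.const_mul _),
      integral_const_mul, integral_const, smul_eq_mul]
    ring
  have hdisc := discrim_le_zero fun c => (hquad c).symm ▸ integral_nonneg fun a => sq_nonneg _
  rw [discrim] at hdisc
  linarith

theorem intervalIntegral.sq_integral_le_mul_integral_sq {f : ℝ → ℝ} (hf : Continuous f)
    {a b : ℝ} (hab : a ≤ b) :
    (∫ t in a..b, f t) ^ 2 ≤ (b - a) * ∫ t in a..b, f t ^ 2 := by
  have hmem : MemLp f 2 (volume.restrict (Ioc a b)) :=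
    (memLp_two_iff_integrable_sq hf.aestronglyMeasurable).2
      ((hf.pow 2).intervalIntegrable a b).1
  have hvol : (volume.restrict (Ioc a b)).real univ = b - a := by
    simp [Measure.real, hab]
  simpa only [intervalIntegral.integral_of_le hab, hvol] using
    sq_integral_le_measureReal_univ_mul_integral_sq hmem

theorem sq_le_mul_integral_deriv_sq {g : ℝ → ℝ} (hg : ContDiff ℝ 1 g) {a t : ℝ}
    (hga : g a = 0) (hat : a ≤ t) :
    g t ^ 2 ≤ (t - a) * ∫ s in a..t, deriv g s ^ 2 := by
  have hg' : Continuous (deriv g) := hg.continuous_deriv le_rfl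
  have hftc : g t = ∫ s in a..t, deriv g s := by
    rw [intervalIntegral.integral_deriv_eq_sub
      (fun s _ => (hg.differentiable one_ne_zero).differentiableAt)
      (hg'.intervalIntegrable a t), hga, sub_zero]
  rw [hftc]
  exact intervalIntegral.sq_integral_le_mul_integral_sq hg' hat

theorem integral_sq_le_sq_mul_integral_deriv_sq {g : ℝ → ℝ} (hg : ContDiff ℝ 1 g) {a b : ℝ}
    (hga : g a = 0) (hab : a ≤ b) :
    ∫ t in a..b, g t ^ 2 ≤ (b - a) ^ 2 * ∫ t in a..b, deriv g t ^ 2 := by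
  have hg'2 : Continuous fun t => deriv g t ^ 2 := (hg.continuous_deriv le_rfl).pow 2
  set I := ∫ t in a..b, deriv g t ^ 2
  have hpointwise : ∀ t ∈ Icc a b, g t ^ 2 ≤ (b - a) * I := fun t ht =>
    calc g t ^ 2 ≤ (t - a) * ∫ s in a..t, deriv g s ^ 2 := sq_le_mul_integral_deriv_sq hg hga ht.1
      _ ≤ (b - a) * I := by
        gcongr
        · exact intervalIntegral.integral_nonneg ht.1 fun s _ => sq_nonneg _
        · linarith [ht.2]
        · exact intervalIntegral.integral_mono_interval le_rfl ht.1 ht.2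
            (Filter.Eventually.of_forall fun s => sq_nonneg _) (hg'2.intervalIntegrable a b)
  calc ∫ t in a..b, g t ^ 2 ≤ ∫ t in a..b, (b - a) * I :=
        intervalIntegral.integral_mono_on hab ((hg.continuous.pow 2).intervalIntegrable a b)
          intervalIntegrable_const hpointwise
    _ = (b - a) ^ 2 * I := by rw [intervalIntegral.integral_const, smul_eq_mul]; ring

theorem IntervalIntegrable.trans_iterate_fin {f : ℝ → ℝ} :
    ∀ {N : ℕ} {x : Fin (N + 1) → ℝ},
      (∀ i : Fin N, IntervalIntegrable f volume (x i.castSucc) (x i.succ)) →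
      IntervalIntegrable f volume (x 0) (x (Fin.last N))
  | 0, _, _ => IntervalIntegrable.refl
  | N + 1, x, hint => by
    have hprev := trans_iterate_fin (x := x ∘ Fin.castSucc) fun i => by simpa using hint i.castSucc
    simpa using hprev.trans (hint (Fin.last N))

theorem sum_integral_adjacent_intervals_fin {f : ℝ → ℝ} :
    ∀ {N : ℕ} {x : Fin (N + 1) → ℝ},
      (∀ i : Fin N, IntervalIntegrable f volume (x i.castSucc) (x i.succ)) →
      ∑ i : Fin N, ∫ t in x i.castSucc..x i.succ, f t = ∫ t in x 0..x (Fin.last N), f t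
  | 0, x, _ => by simp
  | N + 1, x, hint => by
    have hprev := sum_integral_adjacent_intervals_fin (x := x ∘ Fin.castSucc)
      fun i => by simpa using hint i.castSucc
    simp only [Function.comp_apply, Fin.castSucc_zero] at hprev
    simp only [Fin.sum_univ_castSucc, Fin.succ_castSucc, hprev]
    have hprefix := IntervalIntegrable.trans_iterate_fin (x := x ∘ Fin.castSucc)
      fun i => by simpa using hint i.castSucc
    simpa using intervalIntegral.integral_add_adjacent_intervals hprefix (hint (Fin.last N))

theorem poincare_partition_estimate_general
    (N : ℕ) (x : Fin (N + 1) → ℝ) (h : ℝ)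
    (hmono : StrictMono x) (hx0 : x 0 = 0) (hxN : x (Fin.last N) = 1)
    (hmesh : ∀ i : Fin N, x i.succ - x i.castSucc ≤ h)
    (g : ℝ → ℝ) (hg : ContDiff ℝ 1 g)
    (hgz : ∀ i, g (x i) = 0) :
    ∫ t in (0 : ℝ)..1, g t ^ 2 ≤ h ^ 2 * ∫ t in (0 : ℝ)..1, deriv g t ^ 2 := by
  have hsum (F : ℝ → ℝ) (hF : Continuous F) :
      ∑ i : Fin N, ∫ t in x i.castSucc..x i.succ, F t = ∫ t in (0 : ℝ)..1, F t := by
    rw [sum_integral_adjacent_intervals_fin fun _ => hF.intervalIntegrable _ _, hx0, hxN]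
  have hpiece (i : Fin N) : ∫ t in x i.castSucc..x i.succ, g t ^ 2
      ≤ h ^ 2 * ∫ t in x i.castSucc..x i.succ, deriv g t ^ 2 := by
    have hlt : x i.castSucc < x i.succ := hmono Fin.castSucc_lt_succ
    exact (integral_sq_le_sq_mul_integral_deriv_sq hg (hgz _) hlt.le).trans
      (mul_le_mul_of_nonneg_right (pow_le_pow_left₀ (sub_nonneg.2 hlt.le) (hmesh i) 2)
        (intervalIntegral.integral_nonneg hlt.le fun _ _ => sq_nonneg _))
  calc ∫ t in (0 : ℝ)..1, g t ^ 2
      = ∑ i : Fin N, ∫ t in x i.castSucc..x i.succ, g t ^ 2 := (hsum _ (hg.continuous.pow 2)).symm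
    _ ≤ ∑ i : Fin N, h ^ 2 * ∫ t in x i.castSucc..x i.succ, deriv g t ^ 2 :=
      sum_le_sum fun i _ => hpiece i
    _ = h ^ 2 * ∫ t in (0 : ℝ)..1, deriv g t ^ 2 := by
      rw [← mul_sum, hsum (fun t => deriv g t ^ 2) ((hg.continuous_deriv le_rfl).pow 2)]

/-- Discrete Poincaré-type estimate: if `g ∈ C¹` vanishes at all nodes of a partition
`0 = x₀ < x₁ < ⋯ < x_N = 1` of `[0,1]` with mesh size at most `h`, then
`∫₀¹ g² ≤ h² ∫₀¹ (g')²`. -/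
theorem poincare_partition_estimate
    (N : ℕ) (hN : 1 ≤ N) (x : Fin (N + 1) → ℝ) (h : ℝ)
    (hmono : StrictMono x) (hx0 : x 0 = 0) (hxN : x (Fin.last N) = 1)
    (hmesh : ∀ i : Fin N, x i.succ - x i.castSucc ≤ h)
    (g : ℝ → ℝ) (hg : ContDiff ℝ 1 g)
    (hgz : ∀ i, g (x i) = 0) :
    ∫ t in (0 : ℝ)..1, g t ^ 2 ≤ h ^ 2 * ∫ t in (0 : ℝ)..1, deriv g t ^ 2 :=
  poincare_partition_estimate_general N x h hmono hx0 hxN hmesh g hg hgz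
end

section
/- Let V be a real inner product space, τ > 0, K ≥ 1, E₀ ≥ 0, and let v₀, v₁, …, v_K ∈ V satisfy ‖v₀‖ = 1, the orthogonality ⟨v_{k−1}, v_k − v_{k−1}⟩ = 0 for all k = 1, …, K, and the stability bound τ Σ_{k=1}^{K} ‖(v_k − v_{k−1})/τ‖² ≤ E₀. Then 0 ≤ ‖v_K‖² − 1 ≤ τ E₀. (This is the bound on the violation of the arc-length constraint, | |[u_h^K]'(x_i)|² − 1 | ≤ τ E_{h,ε}[u_h^0], caused by its linearized treatment.) -/
/-!
Since each increment `v (k + 1) - v k` is orthogonal to `v k`, Pythagoras makes `‖v k‖²` grow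
by exactly `‖v (k + 1) - v k‖²`. Hence `‖v K‖² - 1` is the sum of the squared increments,
which is nonnegative and equals `τ` times the stability sum.
-/

open Finset

theorem norm_sq_eq_norm_sq_add_sum_norm_sub_sq_of_inner_eq_zero
    {V : Type*} [NormedAddCommGroup V] [InnerProductSpace ℝ V] {v : ℕ → V} {n : ℕ}
    (horth : ∀ k < n, inner ℝ (v k) (v (k + 1) - v k) = 0) :
    ‖v n‖ ^ 2 = ‖v 0‖ ^ 2 + ∑ k ∈ range n, ‖v (k + 1) - v k‖ ^ 2 := by
  induction n with
  | zero => simp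
  | succ n ih =>
    have hstep := norm_add_sq_eq_norm_sq_add_norm_sq_real (horth n n.lt_succ_self)
    rw [add_sub_cancel] at hstep
    rw [sum_range_succ, ← add_assoc, ← ih fun k hk => horth k (Nat.lt_succ_of_lt hk)]
    simpa only [sq] using hstep

theorem sum_norm_sq_eq_mul_mul_sum_norm_smul_sq {E : Type*} [SeminormedAddCommGroup E]
    [NormedSpace ℝ E] {τ : ℝ} (hτ : τ ≠ 0) (s : Finset ℕ) (w : ℕ → E) :
    ∑ k ∈ s, ‖w k‖ ^ 2 = τ * (τ * ∑ k ∈ s, ‖(1 / τ) • w k‖ ^ 2) := by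
  rw [← mul_assoc, mul_sum]
  refine sum_congr rfl fun k _ => ?_
  rw [norm_smul, mul_pow, norm_div, norm_one, Real.norm_eq_abs, div_pow, sq_abs]
  field_simp

theorem arclength_violation_bound_general
    {V : Type*} [NormedAddCommGroup V] [InnerProductSpace ℝ V]
    (τ : ℝ) (hτ : 0 < τ) (K : ℕ) (E₀ : ℝ)
    (v : ℕ → V) (hv0 : ‖v 0‖ = 1)
    (horth : ∀ k < K, (inner ℝ (v k) (v (k + 1) - v k) : ℝ) = 0)
    (hstab : τ * ∑ k ∈ Finset.range K, ‖(1 / τ) • (v (k + 1) - v k)‖ ^ 2 ≤ E₀) :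
    0 ≤ ‖v K‖ ^ 2 - 1 ∧ ‖v K‖ ^ 2 - 1 ≤ τ * E₀ := by
  have hviolation : ‖v K‖ ^ 2 - 1 = ∑ k ∈ range K, ‖v (k + 1) - v k‖ ^ 2 := by
    rw [norm_sq_eq_norm_sq_add_sum_norm_sub_sq_of_inner_eq_zero horth, hv0]
    ring
  refine ⟨hviolation ▸ sum_nonneg fun k _ => sq_nonneg _, ?_⟩
  calc ‖v K‖ ^ 2 - 1
      = τ * (τ * ∑ k ∈ range K, ‖(1 / τ) • (v (k + 1) - v k)‖ ^ 2) := by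
        rw [hviolation, sum_norm_sq_eq_mul_mul_sum_norm_smul_sq hτ.ne']
    _ ≤ τ * E₀ := by gcongr

/-- Bound on the violation of the arc-length constraint due to its linearized treatment:
if `‖v₀‖ = 1`, the increments are orthogonal to the previous iterate, and the stability
bound `τ Σ_{k<K} ‖(v_{k+1} − v_k)/τ‖² ≤ E₀` holds, then `0 ≤ ‖v_K‖² − 1 ≤ τ E₀`. -/
theorem arclength_violation_bound
    {V : Type*} [NormedAddCommGroup V] [InnerProductSpace ℝ V]
    (τ : ℝ) (hτ : 0 < τ) (K : ℕ) (hK : 1 ≤ K) (E₀ : ℝ) (hE₀ : 0 ≤ E₀)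
    (v : ℕ → V) (hv0 : ‖v 0‖ = 1)
    (horth : ∀ k < K, (inner ℝ (v k) (v (k + 1) - v k) : ℝ) = 0)
    (hstab : τ * ∑ k ∈ Finset.range K, ‖(1 / τ) • (v (k + 1) - v k)‖ ^ 2 ≤ E₀) :
    0 ≤ ‖v K‖ ^ 2 - 1 ∧ ‖v K‖ ^ 2 - 1 ≤ τ * E₀ :=
  arclength_violation_bound_general τ hτ K E₀ v hv0 horth hstab
end

section
/- Let H be a real inner product space, let E₁ : H → ℝ be convex and differentiable with gradient ∇E₁ (i.e., E₁ has a gradient at every point), let E₂ : H → ℝ be concave and differentiable with gradient ∇E₂, let τ > 0, and let u, u⁺ ∈ H satisfy the implicit–explicit one-step relation ⟨(u⁺ − u)/τ, u⁺ − u⟩ + ⟨∇E₁(u⁺), u⁺ − u⟩ + ⟨∇E₂(u), u⁺ − u⟩ = 0. Then the total energy E = E₁ + E₂ satisfies the unconditional stability estimate E(u⁺) + τ ‖(u⁺ − u)/τ‖² ≤ E(u). -/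
/-!
Testing convexity of `E₁` at `u⁺` and concavity of `E₂` at `u` against the step `u⁺ - u`
bounds `E(u⁺) - E(u)` by `⟨∇E₁(u⁺) + ∇E₂(u), u⁺ - u⟩`, which the scheme identifies with
`-⟨(u⁺ - u)/τ, u⁺ - u⟩ = -τ‖(u⁺ - u)/τ‖²`. The first-order inequalities come from the
one-variable ones, restricted to the segment `t ↦ x + t • (y - x)`.
-/

open AffineMap

section FirstOrder

variable {E : Type*} [NormedAddCommGroup E] [NormedSpace ℝ E] {s : Set E} {f : E → ℝ}
  {f' : E →L[ℝ] ℝ} {x y : E}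

theorem ConvexOn.hasFDerivAt_apply_sub_le (hf : ConvexOn ℝ s f) (hx : x ∈ s) (hy : y ∈ s)
    (hf' : HasFDerivAt f f' x) : f' (y - x) ≤ f y - f x := by
  have hline : ConvexOn ℝ (lineMap x y ⁻¹' s) (f ∘ lineMap x y) := hf.comp_affineMap _
  have hderiv : HasDerivAt (f ∘ lineMap x y) (f' (y - x)) (0 : ℝ) := by
    simpa using hf'.comp_hasDerivAt_of_eq (0 : ℝ) hasDerivAt_lineMap (by simp)
  simpa [slope_def_field] using
    hline.le_slope_of_hasDerivAt (by simpa using hx) (by simpa using hy) zero_lt_one hderiv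

end FirstOrder

section Gradient

variable {H : Type*} [NormedAddCommGroup H] [InnerProductSpace ℝ H] [CompleteSpace H]
  {s : Set H} {f : H → ℝ} {g x y : H}

theorem ConvexOn.inner_gradient_sub_le (hf : ConvexOn ℝ s f) (hx : x ∈ s) (hy : y ∈ s)
    (hg : HasGradientAt f g x) : inner ℝ g (y - x) ≤ f y - f x := by
  simpa using hf.hasFDerivAt_apply_sub_le hx hy hg.hasFDerivAt

theorem ConcaveOn.sub_le_inner_gradient (hf : ConcaveOn ℝ s f) (hx : x ∈ s) (hy : y ∈ s)
    (hg : HasGradientAt f g x) : f y - f x ≤ inner ℝ g (y - x) := by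
  have hneg : HasGradientAt (-f) (-g) x := by
    simpa [hasGradientAt_iff_hasFDerivAt] using hg.hasFDerivAt.neg
  have := hf.neg.inner_gradient_sub_le hx hy hneg
  simp only [Pi.neg_apply, inner_neg_left] at this
  linarith

end Gradient

theorem real_inner_one_div_smul_self {F : Type*} [NormedAddCommGroup F] [InnerProductSpace ℝ F]
    (τ : ℝ) (v : F) : inner ℝ ((1 / τ) • v) v = τ * ‖(1 / τ) • v‖ ^ 2 := by
  rw [real_inner_smul_left, real_inner_self_eq_norm_sq, norm_smul, mul_pow, Real.norm_eq_abs,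
    sq_abs]
  rcases eq_or_ne τ 0 with rfl | hτ
  · simp
  · field_simp

theorem imex_one_step_energy_stability_general
    {H : Type*} [NormedAddCommGroup H] [InnerProductSpace ℝ H] [CompleteSpace H]
    (E₁ E₂ : H → ℝ) (g₁ g₂ : H → H)
    (hE₁ : ConvexOn ℝ Set.univ E₁) (hg₁ : ∀ x, HasGradientAt E₁ (g₁ x) x)
    (hE₂ : ConcaveOn ℝ Set.univ E₂) (hg₂ : ∀ x, HasGradientAt E₂ (g₂ x) x)
    (τ : ℝ) (u uplus : H)
    (hrel : (inner ℝ ((1 / τ) • (uplus - u)) (uplus - u) : ℝ)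
        + (inner ℝ (g₁ uplus) (uplus - u) : ℝ)
        + (inner ℝ (g₂ u) (uplus - u) : ℝ) = 0) :
    E₁ uplus + E₂ uplus + τ * ‖(1 / τ) • (uplus - u)‖ ^ 2 ≤ E₁ u + E₂ u := by
  have h₁ := hE₁.inner_gradient_sub_le (Set.mem_univ uplus) (Set.mem_univ u) (hg₁ uplus)
  rw [← neg_sub, inner_neg_right] at h₁
  have h₂ := hE₂.sub_le_inner_gradient (Set.mem_univ u) (Set.mem_univ uplus) (hg₂ u)
  rw [real_inner_one_div_smul_self] at hrel
  linarith

/-- Abstract one-step unconditional stability of the implicit–explicit scheme: if `E₁` is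
convex and `E₂` is concave, both differentiable with gradients `g₁`, `g₂`, and the step
`u ↦ u⁺` satisfies `⟨(u⁺−u)/τ, u⁺−u⟩ + ⟨∇E₁(u⁺), u⁺−u⟩ + ⟨∇E₂(u), u⁺−u⟩ = 0`, then the total
energy `E = E₁ + E₂` satisfies `E(u⁺) + τ‖(u⁺−u)/τ‖² ≤ E(u)`. -/
theorem imex_one_step_energy_stability
    {H : Type*} [NormedAddCommGroup H] [InnerProductSpace ℝ H] [CompleteSpace H]
    (E₁ E₂ : H → ℝ) (g₁ g₂ : H → H)
    (hE₁ : ConvexOn ℝ Set.univ E₁) (hg₁ : ∀ x, HasGradientAt E₁ (g₁ x) x)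
    (hE₂ : ConcaveOn ℝ Set.univ E₂) (hg₂ : ∀ x, HasGradientAt E₂ (g₂ x) x)
    (τ : ℝ) (hτ : 0 < τ) (u uplus : H)
    (hrel : (inner ℝ ((1 / τ) • (uplus - u)) (uplus - u) : ℝ)
        + (inner ℝ (g₁ uplus) (uplus - u) : ℝ)
        + (inner ℝ (g₂ u) (uplus - u) : ℝ) = 0) :
    E₁ uplus + E₂ uplus + τ * ‖(1 / τ) • (uplus - u)‖ ^ 2 ≤ E₁ u + E₂ u :=
  imex_one_step_energy_stability_general E₁ E₂ g₁ g₂ hE₁ hg₁ hE₂ hg₂ τ u uplus hrel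
end
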